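/- arXiv:2508.03382 — 2 statements merged into one kernel-verified Lean document; each statement's English description precedes it below -/
import Mathlib

section
/- Let U ⊆ ℝ³ be open and w : ℝ³ → ℍ be twice continuously differentiable and left-monogenic on U (Dw = 0) with harmonic components. Then the function g = wD̄ (the conjugate Cauchy–Riemann operator applied on the right, gD̄ meaning ∂w/∂x − (∂w/∂y)·i − (∂w/∂z)·j) is both left-monogenic and right-monogenic on U: D(wD̄) = 0 and (wD̄)D = 0 on U. -/
open Quaternion MeasureTheory Metric intervalIntegral

noncomputable section

/-- `ℝ³`, identified with the reduced quaternions via `(x,y,z) ↦ x + y·i + z·j`. -/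
abbrev V3 : Type := EuclideanSpace ℝ (Fin 3)

/-- The standard basis vectors of `ℝ³`. -/
noncomputable def ev (m : Fin 3) : V3 := EuclideanSpace.single m 1

/-- Partial derivative of `f` in the `m`-th coordinate direction
(`m = 0,1,2` corresponding to `x,y,z`). -/
noncomputable def pd (m : Fin 3) {E : Type*} [NormedAddCommGroup E] [NormedSpace ℝ E]
    (f : V3 → E) (p : V3) : E := fderiv ℝ f p (ev m)

/-- The quaternion unit `i`. -/
def qi : ℍ[ℝ] := ⟨0, 1, 0, 0⟩

/-- The quaternion unit `j`. -/
def qj : ℍ[ℝ] := ⟨0, 0, 1, 0⟩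

/-- The reduced quaternion `x + y·i + z·j` associated to the point `(x,y,z) ∈ ℝ³`. -/
def toQ (p : V3) : ℍ[ℝ] := ⟨p 0, p 1, p 2, 0⟩

/-- Generalized Cauchy–Riemann operator: `Df = ∂f/∂x + i·(∂f/∂y) + j·(∂f/∂z)`
(quaternion multiplication on the left). -/
noncomputable def Dop (f : V3 → ℍ[ℝ]) (p : V3) : ℍ[ℝ] :=
  pd 0 f p + qi * pd 1 f p + qj * pd 2 f p

/-- Right Cauchy–Riemann operator: `fD = ∂f/∂x + (∂f/∂y)·i + (∂f/∂z)·j`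
(quaternion multiplication on the right). -/
noncomputable def Dright (f : V3 → ℍ[ℝ]) (p : V3) : ℍ[ℝ] :=
  pd 0 f p + pd 1 f p * qi + pd 2 f p * qj

/-- Right conjugate Cauchy–Riemann operator: `fD̄ = ∂f/∂x − (∂f/∂y)·i − (∂f/∂z)·j`
(quaternion multiplication on the right). -/
noncomputable def Dbarright (f : V3 → ℍ[ℝ]) (p : V3) : ℍ[ℝ] :=
  pd 0 f p - pd 1 f p * qi - pd 2 f p * qj

/-- Componentwise Laplacian `Δf = ∂²f/∂x² + ∂²f/∂y² + ∂²f/∂z²`. -/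
noncomputable def lap {E : Type*} [NormedAddCommGroup E] [NormedSpace ℝ E]
    (f : V3 → E) (p : V3) : E :=
  pd 0 (pd 0 f) p + pd 1 (pd 1 f) p + pd 2 (pd 2 f) p

/-! The proof is operator algebra at the level of second partials `∂ₘ∂ₙw`, which are symmetric
for `C²` functions. Since `D` multiplies on the left and `D̄` on the right, associativity and
this symmetry give `D(wD̄) = (Dw)D̄ = 0`. On the other hand the right-acting operators satisfy
`D̄D = Δ`, because `1, i, j` square to `1, -1, -1` and `i, j` anticommute, so `(wD̄)D = Δw = 0`. -/

section PartialDerivatives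

variable {E F : Type*} [NormedAddCommGroup E] [NormedSpace ℝ E]
  [NormedAddCommGroup F] [NormedSpace ℝ F] {f g : V3 → E} {p : V3}

lemma pd_comp_clm (L : E →L[ℝ] F) (hf : DifferentiableAt ℝ f p) (m : Fin 3) :
    pd m (fun q => L (f q)) p = L (pd m f p) := by
  rw [pd, show (fun q => L (f q)) = L ∘ f from rfl, (L.hasFDerivAt.comp p hf.hasFDerivAt).fderiv]
  rfl

lemma pd_add (hf : DifferentiableAt ℝ f p) (hg : DifferentiableAt ℝ g p) (m : Fin 3) :
    pd m (fun q => f q + g q) p = pd m f p + pd m g p := by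
  rw [pd, fderiv_fun_add hf hg]
  rfl

lemma pd_sub (hf : DifferentiableAt ℝ f p) (hg : DifferentiableAt ℝ g p) (m : Fin 3) :
    pd m (fun q => f q - g q) p = pd m f p - pd m g p := by
  rw [pd, fderiv_fun_sub hf hg]
  rfl

lemma pd_eq_zero_of_eventuallyEq_zero (hf : f =ᶠ[nhds p] 0) (m : Fin 3) : pd m f p = 0 := by
  rw [pd, hf.fderiv_eq]
  simp

lemma differentiableAt_fderiv_of_contDiffAt_two (hf : ContDiffAt ℝ 2 f p) :
    DifferentiableAt ℝ (fderiv ℝ f) p :=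
  (hf.fderiv_right (m := 1) (by norm_num)).differentiableAt (by norm_num)

lemma differentiableAt_pd (hf : ContDiffAt ℝ 2 f p) (m : Fin 3) :
    DifferentiableAt ℝ (pd m f) p :=
  (ContinuousLinearMap.apply ℝ E (ev m)).differentiableAt.comp p
    (differentiableAt_fderiv_of_contDiffAt_two hf)

lemma pd_pd_comm (hf : ContDiffAt ℝ 2 f p) (m n : Fin 3) :
    pd m (pd n f) p = pd n (pd m f) p := by
  have hpd2 : ∀ m n : Fin 3, pd m (pd n f) p = fderiv ℝ (fderiv ℝ f) p (ev m) (ev n) :=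
    fun m n => pd_comp_clm (ContinuousLinearMap.apply ℝ E (ev n))
      (differentiableAt_fderiv_of_contDiffAt_two hf) m
  rw [hpd2, hpd2, hf.isSymmSndFDerivAt (by simp)]

end PartialDerivatives

section NormedAlgebra

variable {A : Type*} [NormedRing A] [NormedAlgebra ℝ A] {f : V3 → A} {p : V3}

lemma pd_const_mul (hf : DifferentiableAt ℝ f p) (c : A) (m : Fin 3) :
    pd m (fun q => c * f q) p = c * pd m f p :=
  pd_comp_clm (ContinuousLinearMap.mul ℝ A c) hf m

lemma pd_mul_const (hf : DifferentiableAt ℝ f p) (c : A) (m : Fin 3) :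
    pd m (fun q => f q * c) p = pd m f p * c :=
  pd_comp_clm ((ContinuousLinearMap.mul ℝ A).flip c) hf m

end NormedAlgebra

lemma qi_mul_qi : qi * qi = -1 := by
  apply Quaternion.ext <;> simp only [re_mul, imI_mul, imJ_mul, imK_mul] <;> simp [qi]

lemma qj_mul_qj : qj * qj = -1 := by
  apply Quaternion.ext <;> simp only [re_mul, imI_mul, imJ_mul, imK_mul] <;> simp [qj]

lemma qj_mul_qi_add_qi_mul_qj : qj * qi + qi * qj = 0 := by
  apply Quaternion.ext <;>
    simp only [re_add, imI_add, imJ_add, imK_add, re_mul, imI_mul, imJ_mul, imK_mul] <;>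
    simp [qi, qj]

section CauchyRiemannOperators

variable {w : V3 → ℍ[ℝ]} {p : V3}

lemma pd_Dop (hw : ∀ n, DifferentiableAt ℝ (pd n w) p) (m : Fin 3) :
    pd m (Dop w) p = pd m (pd 0 w) p + qi * pd m (pd 1 w) p + qj * pd m (pd 2 w) p := by
  rw [show Dop w = fun q => (pd 0 w q + qi * pd 1 w q) + qj * pd 2 w q from rfl,
    pd_add ((hw 0).fun_add ((hw 1).const_mul qi)) ((hw 2).const_mul qj),
    pd_add (hw 0) ((hw 1).const_mul qi), pd_const_mul (hw 1), pd_const_mul (hw 2)]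

lemma pd_Dbarright (hw : ∀ n, DifferentiableAt ℝ (pd n w) p) (m : Fin 3) :
    pd m (Dbarright w) p = pd m (pd 0 w) p - pd m (pd 1 w) p * qi - pd m (pd 2 w) p * qj := by
  rw [show Dbarright w = fun q => (pd 0 w q - pd 1 w q * qi) - pd 2 w q * qj from rfl,
    pd_sub ((hw 0).fun_sub ((hw 1).mul_const qi)) ((hw 2).mul_const qj),
    pd_sub (hw 0) ((hw 1).mul_const qi), pd_mul_const (hw 1), pd_mul_const (hw 2)]

lemma Dbarright_eq_zero_of_eventuallyEq_zero (hw : w =ᶠ[nhds p] 0) : Dbarright w p = 0 := by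
  simp [Dbarright, pd_eq_zero_of_eventuallyEq_zero hw]

lemma Dop_Dbarright_eq_Dbarright_Dop (hw : ContDiffAt ℝ 2 w p) :
    Dop (Dbarright w) p = Dbarright (Dop w) p := by
  have hd := differentiableAt_pd hw
  rw [Dop, Dbarright, pd_Dbarright hd, pd_Dbarright hd, pd_Dbarright hd, pd_Dop hd, pd_Dop hd,
    pd_Dop hd, pd_pd_comm hw 1 0, pd_pd_comm hw 2 0, pd_pd_comm hw 2 1]
  noncomm_ring

lemma Dright_Dbarright_eq_lap (hw : ContDiffAt ℝ 2 w p) :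
    Dright (Dbarright w) p = lap w p := by
  have hd := differentiableAt_pd hw
  rw [Dright, lap, pd_Dbarright hd, pd_Dbarright hd, pd_Dbarright hd, pd_pd_comm hw 1 0,
    pd_pd_comm hw 2 0, pd_pd_comm hw 2 1]
  set a : Fin 3 → Fin 3 → ℍ[ℝ] := fun m n => pd m (pd n w) p
  calc a 0 0 - a 0 1 * qi - a 0 2 * qj + (a 0 1 - a 1 1 * qi - a 1 2 * qj) * qi
        + (a 0 2 - a 1 2 * qi - a 2 2 * qj) * qj
      = a 0 0 + a 1 1 + a 2 2 - a 1 1 * (qi * qi + 1) - a 2 2 * (qj * qj + 1)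
        - a 1 2 * (qj * qi + qi * qj) := by noncomm_ring
    _ = a 0 0 + a 1 1 + a 2 2 := by simp [qi_mul_qi, qj_mul_qj, qj_mul_qi_add_qi_mul_qj]

end CauchyRiemannOperators

/-- If `w` is twice continuously differentiable, left-monogenic and has
harmonic components on an open set `U ⊆ ℝ³`, then `g = wD̄` is both left-monogenic and
right-monogenic on `U`: `D(wD̄) = 0` and `(wD̄)D = 0` on `U`. -/
theorem right_conjugate_derivative_is_two_sided_monogenic
    (U : Set V3) (hU : IsOpen U) (w : V3 → ℍ[ℝ]) (hw : ContDiffOn ℝ 2 w U)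
    (hmono : ∀ p ∈ U, Dop w p = 0) (hharm : ∀ p ∈ U, lap w p = 0) :
    ∀ p ∈ U, Dop (Dbarright w) p = 0 ∧ Dright (Dbarright w) p = 0 := by
  intro p hp
  have hw2 : ContDiffAt ℝ 2 w p := hw.contDiffAt (hU.mem_nhds hp)
  have hDw : Dop w =ᶠ[nhds p] 0 := Filter.eventually_of_mem (hU.mem_nhds hp) hmono
  constructor
  · rw [Dop_Dbarright_eq_Dbarright_Dop hw2]
    exact Dbarright_eq_zero_of_eventuallyEq_zero hDw
  · rw [Dright_Dbarright_eq_lap hw2]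
    exact hharm p hp
end
end

section
/- Monogenic Blasius–Chaplygin force formula on a sphere: let B ⊆ ℝ³ be a closed ball with center c and radius r > 0 and let w = φ + ψ₁·i + ψ₂·j + ψ₃·k be continuously differentiable and left-monogenic (Dw = 0) on an open set containing B, where ψ₁ depends only on (x,y), ψ₂ only on (x,z), ψ₃ only on (y,z). Assume that at every point y of the sphere S = ∂B, the gradients ∇ψ₁(y), ∇ψ₂(y), ∇ψ₃(y) are each scalar multiples of the outward unit normal ν(y) = (y − c)/r. Then, with ν(y) viewed as a reduced quaternion, g = wD̄, and dS the surface measure on S: ∫_S |D(conj w)(y)|² ν(y) dS(y) = −∫_S [ Sc(g(y)·ν(y)·g(y)) + Sc(g(y)·ν(y)·g(y)·i)·i + Sc(g(y)·ν(y)·g(y)·j)·j ] dS(y). -/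
open Quaternion MeasureTheory Metric intervalIntegral

noncomputable section

/-- Surface integral over the sphere of center `c` and radius `r` in `ℝ³`, with respect to the
two-dimensional surface measure: the sphere is parametrized by `u ↦ c + r•u` over the unit
sphere (carrying the canonical surface measure `volume.toSphere`, of total mass `4π`), and the
surface measure scales by the factor `r²`. -/
noncomputable def sInt (c : V3) (r : ℝ) {E : Type*} [NormedAddCommGroup E] [NormedSpace ℝ E]
    (F : V3 → E) : E :=
  r ^ 2 • ∫ u : sphere (0 : V3) 1, F (c + r • (u : V3)) ∂((volume : Measure V3).toSphere)

/-! The identity holds pointwise on the sphere. With `g = wD̄` one always has `D(conj w) = conj g`,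
so the left integrand is `|g|² ν`. Monogenicity makes `Sc(g ν)` a sum of `2 × 2` minors of the
pairs `(∇ψₖ, ν)`, which vanish because `∇ψₖ ∥ ν`. For `g ν` purely imaginary,
`conj (g ν g) = conj g · conj (g ν) = -conj g · g ν = -|g|² ν`, and the right integrand is exactly
the `1, i, j` part of `conj (g ν g)`. -/

-- The anonymous constructors in `qi`, `qj`, `toQ` elaborate in `ℍ[ℝ,-1,-1]`, where `simp` does not
-- reduce their projections.
theorem qi_components : qi.re = 0 ∧ qi.imI = 1 ∧ qi.imJ = 0 ∧ qi.imK = 0 := ⟨rfl, rfl, rfl, rfl⟩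

theorem qj_components : qj.re = 0 ∧ qj.imI = 0 ∧ qj.imJ = 1 ∧ qj.imK = 0 := ⟨rfl, rfl, rfl, rfl⟩

theorem toQ_components (p : V3) :
    (toQ p).re = p 0 ∧ (toQ p).imI = p 1 ∧ (toQ p).imJ = p 2 ∧ (toQ p).imK = 0 :=
  ⟨rfl, rfl, rfl, rfl⟩

namespace Quaternion

instance {R : Type*} [CommRing R] [StarRing R] [TrivialStar R] : StarModule R ℍ[R] :=
  ⟨fun r a => by ext <;> simp⟩

theorem star_mul_mul_eq_neg_normSq_smul_of_re_mul_eq_zero {R : Type*} [CommRing R]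
    [NoZeroDivisors R] [CharZero R] {g ν : ℍ[R]} (h : (g * ν).re = 0) :
    star (g * ν * g) = -(normSq g • ν) := by
  rw [star_mul, star_eq_neg.mpr h, mul_neg, ← mul_assoc, star_mul_self, coe_mul_eq_smul]

theorem coe_re_add_re_mul_qi_smul_add_re_mul_qj_smul {q : ℍ[ℝ]} (hq : q.imK = 0) :
    (q.re : ℍ[ℝ]) + (q * qi).re • qi + (q * qj).re • qj = star q := by
  ext <;> simp [qi_components, qj_components, hq]

theorem sq_norm_smul_eq_neg_scalar_parts {g ν : ℍ[ℝ]} (hre : (g * ν).re = 0) (hk : ν.imK = 0) :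
    ‖g‖ ^ 2 • ν = -(((g * ν * g).re : ℍ[ℝ]) + (g * ν * g * qi).re • qi
      + (g * ν * g * qj).re • qj) := by
  have hstar := star_mul_mul_eq_neg_normSq_smul_of_re_mul_eq_zero hre
  have hk' : (g * ν * g).imK = 0 := by
    have := congrArg QuaternionAlgebra.imK hstar
    rw [imK_star, imK_neg, imK_smul, hk, smul_zero, neg_zero] at this
    exact neg_eq_zero.mp this
  rw [coe_re_add_re_mul_qi_smul_add_re_mul_qj_smul hk', hstar, neg_neg, normSq_eq_norm_mul_self,
    sq]

end Quaternion

open Quaternion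

theorem pd_star (m : Fin 3) (f : V3 → ℍ[ℝ]) (p : V3) :
    pd m (fun q => star (f q)) p = star (pd m f p) := by
  simp [pd]

theorem Dop_star_eq_star_Dbarright (f : V3 → ℍ[ℝ]) (p : V3) :
    Dop (fun q => star (f q)) p = star (Dbarright f p) := by
  have hi : star qi = -qi := by ext <;> simp [qi_components]
  have hj : star qj = -qj := by ext <;> simp [qj_components]
  simp only [Dop, Dbarright, pd_star, star_sub, star_mul, hi, hj]
  noncomm_ring

theorem pd_components {w : V3 → ℍ[ℝ]} {f₀ f₁ f₂ f₃ : V3 → ℝ}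
    (hw : ∀ q, w q = ⟨f₀ q, f₁ q, f₂ q, f₃ q⟩) {p : V3} (h₀ : DifferentiableAt ℝ f₀ p)
    (h₁ : DifferentiableAt ℝ f₁ p) (h₂ : DifferentiableAt ℝ f₂ p) (h₃ : DifferentiableAt ℝ f₃ p)
    (m : Fin 3) :
    (pd m w p).re = pd m f₀ p ∧ (pd m w p).imI = pd m f₁ p ∧ (pd m w p).imJ = pd m f₂ p ∧
      (pd m w p).imK = pd m f₃ p := by
  have hsum : w = fun q => f₀ q • (1 : ℍ[ℝ]) + f₁ q • qi + f₂ q • qj + f₃ q • (qi * qj) := by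
    funext q; ext <;> simp [hw, qi_components, qj_components]
  have hderiv := (((h₀.hasFDerivAt.smul_const (1 : ℍ[ℝ])).fun_add
    (h₁.hasFDerivAt.smul_const qi)).fun_add (h₂.hasFDerivAt.smul_const qj)).fun_add
    (h₃.hasFDerivAt.smul_const (qi * qj))
  simp [pd, hsum, hderiv.fderiv, qi_components, qj_components]

theorem pd_mul_eq_pd_mul_of_parallel {ψ : V3 → ℝ} {p n : V3}
    (h : ∃ t : ℝ, ∀ m : Fin 3, pd m ψ p = t * n m) (a b : Fin 3) :
    pd a ψ p * n b = pd b ψ p * n a := by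
  obtain ⟨t, ht⟩ := h
  rw [ht a, ht b]
  ring

section Monogenic

variable {w : V3 → ℍ[ℝ]} {φ ψ₁ ψ₂ ψ₃ : V3 → ℝ} {p : V3}

theorem Dbarright_components_of_Dop_eq_zero (hw : ∀ q, w q = ⟨φ q, ψ₁ q, ψ₂ q, ψ₃ q⟩)
    (hφ : DifferentiableAt ℝ φ p) (hψ₁ : DifferentiableAt ℝ ψ₁ p)
    (hψ₂ : DifferentiableAt ℝ ψ₂ p) (hψ₃ : DifferentiableAt ℝ ψ₃ p) (hmono : Dop w p = 0) :
    (Dbarright w p).re = 2 * (pd 1 ψ₁ p + pd 2 ψ₂ p) ∧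
      (Dbarright w p).imI = 2 * (pd 0 ψ₁ p + pd 2 ψ₃ p) ∧
      (Dbarright w p).imJ = 2 * (pd 0 ψ₂ p - pd 1 ψ₃ p) := by
  obtain ⟨x₀, x₁, x₂, -⟩ := pd_components hw hφ hψ₁ hψ₂ hψ₃ 0
  obtain ⟨y₀, y₁, y₂, y₃⟩ := pd_components hw hφ hψ₁ hψ₂ hψ₃ 1
  obtain ⟨z₀, z₁, z₂, z₃⟩ := pd_components hw hφ hψ₁ hψ₂ hψ₃ 2
  have h₀ := congrArg QuaternionAlgebra.re hmono
  have h₁ := congrArg QuaternionAlgebra.imI hmono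
  have h₂ := congrArg QuaternionAlgebra.imJ hmono
  simp only [Dop, re_add, imI_add, imJ_add, re_mul, imI_mul, imJ_mul, qi_components,
    qj_components, re_zero, imI_zero, imJ_zero, x₀, x₁, x₂, y₀, y₁, y₂, y₃, z₀, z₁, z₂, z₃]
    at h₀ h₁ h₂
  simp only [Dbarright, re_sub, imI_sub, imJ_sub, re_mul, imI_mul, imJ_mul, qi_components,
    qj_components, x₀, x₁, x₂, y₀, y₁, y₂, y₃, z₀, z₁, z₂, z₃]
  exact ⟨by linear_combination h₀, by linear_combination -h₁, by linear_combination -h₂⟩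

theorem re_Dbarright_mul_toQ_eq_zero (hw : ∀ q, w q = ⟨φ q, ψ₁ q, ψ₂ q, ψ₃ q⟩)
    (hφ : DifferentiableAt ℝ φ p) (hψ₁ : DifferentiableAt ℝ ψ₁ p)
    (hψ₂ : DifferentiableAt ℝ ψ₂ p) (hψ₃ : DifferentiableAt ℝ ψ₃ p) (hmono : Dop w p = 0)
    {n : V3} (hpar₁ : ∃ t : ℝ, ∀ m : Fin 3, pd m ψ₁ p = t * n m)
    (hpar₂ : ∃ t : ℝ, ∀ m : Fin 3, pd m ψ₂ p = t * n m)
    (hpar₃ : ∃ t : ℝ, ∀ m : Fin 3, pd m ψ₃ p = t * n m) :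
    (Dbarright w p * toQ n).re = 0 := by
  obtain ⟨g₀, g₁, g₂⟩ := Dbarright_components_of_Dop_eq_zero hw hφ hψ₁ hψ₂ hψ₃ hmono
  simp only [re_mul, toQ_components, g₀, g₁, g₂, mul_zero, sub_zero]
  linear_combination 2 * (pd_mul_eq_pd_mul_of_parallel hpar₁ 1 0
    + pd_mul_eq_pd_mul_of_parallel hpar₂ 2 0 + pd_mul_eq_pd_mul_of_parallel hpar₃ 1 2)

end Monogenic

theorem sInt_neg (c : V3) (r : ℝ) {E : Type*} [NormedAddCommGroup E] [NormedSpace ℝ E]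
    (F : V3 → E) : sInt c r (fun y => -F y) = -sInt c r F := by
  rw [sInt, sInt, MeasureTheory.integral_neg, smul_neg]

theorem sInt_congr {c : V3} {r : ℝ} (hr : 0 ≤ r) {E : Type*} [NormedAddCommGroup E]
    [NormedSpace ℝ E] {F G : V3 → E} (h : ∀ y ∈ sphere c r, F y = G y) :
    sInt c r F = sInt c r G := by
  refine congrArg (r ^ 2 • ·) (integral_congr_ae (Filter.Eventually.of_forall fun u => h _ ?_))
  simp [norm_smul, abs_of_nonneg hr]

theorem monogenic_blasius_chaplygin_force_general
    (c : V3) (r : ℝ) (hr : 0 < r) (W : Set V3) (hW : IsOpen W)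
    (hBW : closedBall c r ⊆ W) (φ ψ₁ ψ₂ ψ₃ : V3 → ℝ)
    (hφ : ContDiffOn ℝ 1 φ W) (hψ₁ : ContDiffOn ℝ 1 ψ₁ W)
    (hψ₂ : ContDiffOn ℝ 1 ψ₂ W) (hψ₃ : ContDiffOn ℝ 1 ψ₃ W)
    (w : V3 → ℍ[ℝ]) (hw : ∀ q, w q = ⟨φ q, ψ₁ q, ψ₂ q, ψ₃ q⟩)
    (hmono : ∀ q ∈ W, Dop w q = 0)
    (hpar₁ : ∀ y ∈ sphere c r, ∃ t : ℝ, ∀ m : Fin 3, pd m ψ₁ y = t * (r⁻¹ • (y - c)) m)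
    (hpar₂ : ∀ y ∈ sphere c r, ∃ t : ℝ, ∀ m : Fin 3, pd m ψ₂ y = t * (r⁻¹ • (y - c)) m)
    (hpar₃ : ∀ y ∈ sphere c r, ∃ t : ℝ, ∀ m : Fin 3, pd m ψ₃ y = t * (r⁻¹ • (y - c)) m) :
    sInt c r (fun y => ‖Dop (fun q => star (w q)) y‖ ^ 2 • toQ (r⁻¹ • (y - c)))
      = -sInt c r (fun y =>
          ((Dbarright w y * toQ (r⁻¹ • (y - c)) * Dbarright w y).re : ℍ[ℝ])
            + (Dbarright w y * toQ (r⁻¹ • (y - c)) * Dbarright w y * qi).re • qi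
            + (Dbarright w y * toQ (r⁻¹ • (y - c)) * Dbarright w y * qj).re • qj) := by
  rw [← sInt_neg]
  refine sInt_congr hr.le fun y hy => ?_
  have hyW : y ∈ W := hBW (sphere_subset_closedBall hy)
  have hdiff : ∀ f : V3 → ℝ, ContDiffOn ℝ 1 f W → DifferentiableAt ℝ f y := fun f hf =>
    (hf.differentiableOn one_ne_zero).differentiableAt (hW.mem_nhds hyW)
  rw [Dop_star_eq_star_Dbarright, norm_star]
  exact sq_norm_smul_eq_neg_scalar_parts
    (re_Dbarright_mul_toQ_eq_zero hw (hdiff φ hφ) (hdiff ψ₁ hψ₁) (hdiff ψ₂ hψ₂) (hdiff ψ₃ hψ₃)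
      (hmono y hyW) (hpar₁ y hy) (hpar₂ y hy) (hpar₃ y hy)) (toQ_components _).2.2.2

/-- Monogenic Blasius–Chaplygin force formula on a sphere: for a geometric
flow potential `w = φ + ψ₁·i + ψ₂·j + ψ₃·k`, left-monogenic and continuously differentiable
on an open set containing the closed ball `B(c,r)`, whose stream-function gradients are
parallel to the outward unit normal `ν(y) = (y − c)/r` at every point of the sphere `S = ∂B`,
one has, with `g = wD̄`:
`∫_S |D(conj w)(y)|² ν(y) dS(y)
  = −∫_S [Sc(g·ν·g) + Sc(g·ν·g·i)·i + Sc(g·ν·g·j)·j] dS(y)`. -/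
theorem monogenic_blasius_chaplygin_force
    (c : V3) (r : ℝ) (hr : 0 < r) (W : Set V3) (hW : IsOpen W)
    (hBW : closedBall c r ⊆ W) (φ ψ₁ ψ₂ ψ₃ : V3 → ℝ)
    (hφ : ContDiffOn ℝ 1 φ W) (hψ₁ : ContDiffOn ℝ 1 ψ₁ W)
    (hψ₂ : ContDiffOn ℝ 1 ψ₂ W) (hψ₃ : ContDiffOn ℝ 1 ψ₃ W)
    (w : V3 → ℍ[ℝ]) (hw : ∀ q, w q = ⟨φ q, ψ₁ q, ψ₂ q, ψ₃ q⟩)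
    (hmono : ∀ q ∈ W, Dop w q = 0)
    (hdep₁ : ∀ q ∈ W, pd 2 ψ₁ q = 0)
    (hdep₂ : ∀ q ∈ W, pd 1 ψ₂ q = 0)
    (hdep₃ : ∀ q ∈ W, pd 0 ψ₃ q = 0)
    (hpar₁ : ∀ y ∈ sphere c r, ∃ t : ℝ, ∀ m : Fin 3, pd m ψ₁ y = t * (r⁻¹ • (y - c)) m)
    (hpar₂ : ∀ y ∈ sphere c r, ∃ t : ℝ, ∀ m : Fin 3, pd m ψ₂ y = t * (r⁻¹ • (y - c)) m)
    (hpar₃ : ∀ y ∈ sphere c r, ∃ t : ℝ, ∀ m : Fin 3, pd m ψ₃ y = t * (r⁻¹ • (y - c)) m) :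
    sInt c r (fun y => ‖Dop (fun q => star (w q)) y‖ ^ 2 • toQ (r⁻¹ • (y - c)))
      = -sInt c r (fun y =>
          ((Dbarright w y * toQ (r⁻¹ • (y - c)) * Dbarright w y).re : ℍ[ℝ])
            + (Dbarright w y * toQ (r⁻¹ • (y - c)) * Dbarright w y * qi).re • qi
            + (Dbarright w y * toQ (r⁻¹ • (y - c)) * Dbarright w y * qj).re • qj) :=
  monogenic_blasius_chaplygin_force_general c r hr W hW hBW φ ψ₁ ψ₂ ψ₃ hφ hψ₁ hψ₂ hψ₃ w hw hmono
    hpar₁ hpar₂ hpar₃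
end
end
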